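/- The map x ↦ ∑_{n=1}^∞ x_n · 9/10^n from {0,1}^ℕ to ℝ is strictly monotone with respect to the lexicographic order: if x <_lex y then ∑_n x_n · 9/10^n < ∑_n y_n · 9/10^n. -/

import Mathlib

/-!
Split both series after coordinate `m`. The partial sums before `m` agree, at `m` the series
of `y` gains the weight `9/10^(m+1)`, and the whole tail of the series of `x` is at most
`∑_{k > m} 9/10^(k+1) = 1/10^(m+1)`, which is smaller. Only the fact that each weight
dominates the sum of all later weights is used.
-/

/-- The address map of the decimal Cantor set: `x ↦ ∑_{n=1}^∞ x_n · 9/10^n`. -/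
noncomputable def decimalCantorMap (x : ℕ → Bool) : ℝ :=
  ∑' n : ℕ, (if x n then (9 : ℝ) / 10 ^ (n + 1) else 0)

section WeightedDigits

variable {w : ℕ → ℝ}

lemma ite_weight_nonneg (hw0 : ∀ n, 0 ≤ w n) (x : ℕ → Bool) (n : ℕ) :
    0 ≤ if x n then w n else 0 := by
  split
  · exact hw0 n
  · exact le_rfl

lemma ite_weight_le (hw0 : ∀ n, 0 ≤ w n) (x : ℕ → Bool) (n : ℕ) :
    (if x n then w n else 0) ≤ w n := by
  split
  · exact le_rfl
  · exact hw0 n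

lemma summable_ite_weight (hw : Summable w) (hw0 : ∀ n, 0 ≤ w n) (x : ℕ → Bool) :
    Summable fun n => if x n then w n else 0 :=
  hw.of_nonneg_of_le (ite_weight_nonneg hw0 x) (ite_weight_le hw0 x)

lemma tsum_ite_weight_le (hw : Summable w) (hw0 : ∀ n, 0 ≤ w n) (x : ℕ → Bool) :
    ∑' n, (if x n then w n else 0) ≤ ∑' n, w n :=
  (summable_ite_weight hw hw0 x).tsum_le_tsum (ite_weight_le hw0 x) hw

theorem tsum_ite_weight_lt_of_lex (hw : Summable w) (hw0 : ∀ n, 0 ≤ w n) {m : ℕ}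
    (hdom : ∑' k, w (k + (m + 1)) < w m) {x y : ℕ → Bool}
    (hagree : ∀ k < m, x k = y k) (hx : x m = false) (hy : y m = true) :
    ∑' n, (if x n then w n else 0) < ∑' n, (if y n then w n else 0) := by
  have hw' : Summable fun k => w (k + (m + 1)) := (summable_nat_add_iff (m + 1)).2 hw
  have hw0' : ∀ k, 0 ≤ w (k + (m + 1)) := fun k => hw0 _
  have hhead : ∑ k ∈ Finset.range m, (if x k then w k else 0)
      = ∑ k ∈ Finset.range m, (if y k then w k else 0) :=
    Finset.sum_congr rfl fun k hk => by rw [hagree k (Finset.mem_range.mp hk)]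
  have htail_x : ∑' k, (if x (k + (m + 1)) then w (k + (m + 1)) else 0) < w m :=
    (tsum_ite_weight_le hw' hw0' fun k => x (k + (m + 1))).trans_lt hdom
  have htail_y : 0 ≤ ∑' k, (if y (k + (m + 1)) then w (k + (m + 1)) else 0) :=
    tsum_nonneg (ite_weight_nonneg hw0' fun k => y (k + (m + 1)))
  rw [← (summable_ite_weight hw hw0 x).sum_add_tsum_nat_add (m + 1),
    ← (summable_ite_weight hw hw0 y).sum_add_tsum_nat_add (m + 1),
    Finset.sum_range_succ, Finset.sum_range_succ, hhead, hx, hy]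
  simp only [Bool.false_eq_true, if_false, if_true]
  linarith

end WeightedDigits

lemma hasSum_nine_div_ten_pow_succ : HasSum (fun n : ℕ => (9 : ℝ) / 10 ^ (n + 1)) 1 := by
  have h := (hasSum_geometric_of_lt_one (r := (1 / 10 : ℝ)) (by norm_num) (by norm_num)).mul_left
    (9 / 10)
  rw [show (9 / 10 : ℝ) * (1 - 1 / 10)⁻¹ = 1 by norm_num] at h
  have e : (fun n : ℕ => (9 : ℝ) / 10 ^ (n + 1)) = fun n => 9 / 10 * (1 / 10) ^ n :=
    funext fun n => by rw [one_div_pow, pow_succ]; field_simp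
  rwa [e]

lemma tsum_nine_div_ten_pow_tail (m : ℕ) :
    ∑' k : ℕ, (9 : ℝ) / 10 ^ (k + (m + 1) + 1) = 1 / 10 ^ (m + 1) := by
  have h : ∀ k : ℕ, (9 : ℝ) / 10 ^ (k + (m + 1) + 1) = 1 / 10 ^ (m + 1) * (9 / 10 ^ (k + 1)) :=
    fun k => by rw [show k + (m + 1) + 1 = (m + 1) + (k + 1) by ring, pow_add]; field_simp
  rw [tsum_congr h, tsum_mul_left, hasSum_nine_div_ten_pow_succ.tsum_eq, mul_one]

theorem stmt7 (x y : ℕ → Bool) (m : ℕ)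
    (hagree : ∀ k < m, x k = y k) (hx : x m = false) (hy : y m = true) :
    decimalCantorMap x < decimalCantorMap y := by
  have hdom : ∑' k : ℕ, (9 : ℝ) / 10 ^ (k + (m + 1) + 1) < 9 / 10 ^ (m + 1) := by
    rw [tsum_nine_div_ten_pow_tail]
    gcongr
    norm_num
  exact tsum_ite_weight_lt_of_lex hasSum_nine_div_ten_pow_succ.summable (fun n => by positivity)
    hdom hagree hx hy
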